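/- arXiv:2312.17640 — 3 statements merged into one kernel-verified Lean document; each statement's English description precedes it below -/
import Mathlib

section
/- Let A be a real m×n matrix with rows a_1,…,a_m, let b ∈ ℝ^m, and assume the polyhedron V = {v ∈ ℝ^n : A v ≥ b} (inequalities entrywise) is nonempty and bounded. Let (x^i, c^i), i = 1,…,N, be data with x^i ∈ ℝ^K and c^i ∈ ℝ^n, and assume that for every i the set V*(c^i) of minimizers of v ↦ c^i · v over V is a singleton {v^i}; let I^i = {j : a_j · v^i = b_j} be the set of constraints active at v^i. Then the following are equivalent: (1) there exists a matrix ω ∈ ℝ^{n×K} with zero pessimistic regret, i.e., for every i and every v ∈ V*(ω x^i) one has c^i · v = z*(c^i); (2) the linear system in variables (ω, ρ^1,…,ρ^N) with ω ∈ ℝ^{n×K} and ρ^i ∈ ℝ^m given by A^T ρ^i = ω x^i for all i, ρ^i_j ≥ 1 for all j ∈ I^i, and ρ^i_j = 0 for all j ∉ I^i, is feasible. -/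
/-!
Both directions are linear programming duality at the vertex `v^i`. If `ρ^i` is a dual solution
for the cost `ω x^i` that is positive exactly on the constraints active at `v^i`, complementary
slackness pushes every minimizer of `ω x^i` onto the face of `V` cut out by those constraints, and
`c^i` is constant on that face near its minimizer `v^i`; so the regret is zero. Conversely, zero
regret and uniqueness of `v^i` make `v^i` the unique minimizer of `ω x^i`, which by Farkas' lemma
puts `ω x^i` in the interior of the normal cone of `V` at `v^i`; one common rescaling of `ω` then
makes all the active multipliers at least `1`. Farkas' lemma rests on the closedness of finitely
generated cones, proved by conic Carathéodory.
-/

open Matrix Set BigOperators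

noncomputable section

/-- The polyhedron `V = {v : A v ≥ b}` (inequalities entrywise). -/
def polyV {m n : ℕ} (A : Matrix (Fin m) (Fin n) ℝ) (b : Fin m → ℝ) : Set (Fin n → ℝ) :=
  {v | b ≤ A.mulVec v}

/-- `z*(c)`: the optimal (infimum) value of `c · v` over `V`. -/
noncomputable def zstar {m n : ℕ} (A : Matrix (Fin m) (Fin n) ℝ) (b : Fin m → ℝ)
    (c : Fin n → ℝ) : ℝ :=
  sInf ((fun v => c ⬝ᵥ v) '' polyV A b)

/-- `V*(c)`: the set of optimal solutions of `min {c · v : v ∈ V}`. -/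
def Vstar {m n : ℕ} (A : Matrix (Fin m) (Fin n) ℝ) (b : Fin m → ℝ)
    (c : Fin n → ℝ) : Set (Fin n → ℝ) :=
  {v ∈ polyV A b | c ⬝ᵥ v = zstar A b c}

section NonnegSpan

variable {ι E : Type*} [NormedAddCommGroup E] [NormedSpace ℝ E]

def nonnegSpan (g : ι → E) (s : Finset ι) : Set E :=
  {x | ∃ t : ι → ℝ, (∀ i ∈ s, 0 ≤ t i) ∧ ∑ i ∈ s, t i • g i = x}

theorem mem_nonnegSpan_of_mem {g : ι → E} {s : Finset ι} {i : ι} (hi : i ∈ s) :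
    g i ∈ nonnegSpan g s := by
  classical
  refine ⟨Pi.single i 1, fun j _ => ?_, ?_⟩
  · by_cases h : j = i <;> simp [h]
  · rw [Finset.sum_eq_single_of_mem i hi fun j _ hji => by simp [hji]]
    simp

theorem nonnegSpan_mono {g : ι → E} {s s' : Finset ι} (h : s ⊆ s') :
    nonnegSpan g s ⊆ nonnegSpan g s' := by
  classical
  rintro x ⟨t, ht, rfl⟩
  refine ⟨fun i => if i ∈ s then t i else 0, fun i _ => ?_, ?_⟩
  · by_cases hi : i ∈ s <;> simp [hi, ht i]
  · simp only [ite_smul, zero_smul, Finset.sum_ite_mem, Finset.inter_eq_right.2 h]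

theorem isClosed_nonnegSpan_of_linearIndepOn {g : ι → E} {s : Finset ι}
    (hg : LinearIndepOn ℝ g s) : IsClosed (nonnegSpan g s) := by
  classical
  set L := Fintype.linearCombination ℝ fun i : s => g i
  have hL : Topology.IsClosedEmbedding L :=
    LinearMap.isClosedEmbedding_of_injective
      (LinearMap.ker_eq_bot.2 hg.fintypeLinearCombination_injective)
  have himage : nonnegSpan g s = L '' Ici 0 := by
    ext x
    constructor
    · rintro ⟨t, ht, rfl⟩
      refine ⟨fun i => t i, fun i => ht i i.2, ?_⟩
      simp only [L, Fintype.linearCombination_apply]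
      exact Finset.sum_coe_sort s fun i => t i • g i
    · rintro ⟨t, ht, rfl⟩
      refine ⟨fun i => if hi : i ∈ s then t ⟨i, hi⟩ else 0,
        fun i hi => by simpa [hi] using ht ⟨i, hi⟩, ?_⟩
      simp only [L, Fintype.linearCombination_apply, ← Finset.sum_coe_sort s]
      exact Finset.sum_congr rfl fun i _ => by simp
  rw [himage]
  exact hL.isClosedMap _ isClosed_Ici

/-- Conic Carathéodory step: a linear dependency among the generators lets one be dropped. -/
theorem exists_mem_nonnegSpan_erase [DecidableEq ι] {g : ι → E} {s : Finset ι} {l : ι → ℝ}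
    (hl : ∑ i ∈ s, l i • g i = 0) {j : ι} (hj : j ∈ s) (hlj : l j ≠ 0) {x : E}
    (hx : x ∈ nonnegSpan g s) : ∃ k ∈ s, x ∈ nonnegSpan g (s.erase k) := by
  wlog hpos : 0 < l j generalizing l
  · exact this (l := -l) (by simp [neg_smul, Finset.sum_neg_distrib, hl]) (neg_ne_zero.2 hlj)
      (neg_pos.2 (hlj.lt_or_gt.resolve_right hpos))
  obtain ⟨t, ht, rfl⟩ := hx
  obtain ⟨k, hk, hkmin⟩ := (s.filter (0 < l ·)).exists_min_image (fun i => t i / l i)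
    ⟨j, Finset.mem_filter.2 ⟨hj, hpos⟩⟩
  obtain ⟨hks, hlk⟩ := Finset.mem_filter.1 hk
  set μ := t k / l k
  have hμ : 0 ≤ μ := div_nonneg (ht k hks) hlk.le
  refine ⟨k, hks, fun i => t i - μ * l i, fun i hi => ?_, ?_⟩
  · have his := Finset.mem_of_mem_erase hi
    rcases le_or_gt (l i) 0 with hli | hli
    · nlinarith [ht i his]
    · have := hkmin i (Finset.mem_filter.2 ⟨his, hli⟩)
      rw [le_div_iff₀ hli] at this
      linarith
  · rw [Finset.sum_erase s (by simp [μ, hlk.ne'])]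
    simp only [sub_smul, Finset.sum_sub_distrib, mul_smul, ← Finset.smul_sum, hl, smul_zero,
      sub_zero]

theorem isClosed_nonnegSpan (g : ι → E) (s : Finset ι) : IsClosed (nonnegSpan g s) := by
  classical
  induction s using Finset.strongInduction with
  | H s ih =>
  by_cases hg : LinearIndepOn ℝ g s
  · exact isClosed_nonnegSpan_of_linearIndepOn hg
  obtain ⟨l, hl, j, hj, hlj⟩ := not_linearIndepOn_finset_iff.1 hg
  have hunion : nonnegSpan g s = ⋃ k ∈ s, nonnegSpan g (s.erase k) := by
    refine Set.Subset.antisymm (fun x hx => ?_) (iUnion₂_subset fun k _ => ?_)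
    · obtain ⟨k, hk, hxk⟩ := exists_mem_nonnegSpan_erase hl hj hlj hx
      exact mem_biUnion hk hxk
    · exact nonnegSpan_mono (s.erase_subset k)
  rw [hunion]
  exact isClosed_biUnion_finset fun k hk => ih _ (Finset.erase_ssubset hk)

theorem exists_separating_of_notMem_nonnegSpan {g : ι → E} {s : Finset ι} {x : E}
    (hx : x ∉ nonnegSpan g s) : ∃ f : StrongDual ℝ E, (∀ i ∈ s, 0 ≤ f (g i)) ∧ f x < 0 := by
  let C : ProperCone ℝ E :=
    { carrier := nonnegSpan g s
      add_mem' := by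
        rintro _ _ ⟨t, ht, rfl⟩ ⟨t', ht', rfl⟩
        exact ⟨t + t', fun i hi => add_nonneg (ht i hi) (ht' i hi), by
          simp only [Pi.add_apply, add_smul, Finset.sum_add_distrib]⟩
      zero_mem' := ⟨0, fun _ _ => le_rfl, by simp⟩
      smul_mem' := by
        rintro r _ ⟨t, ht, rfl⟩
        exact ⟨fun i => r * t i, fun i hi => mul_nonneg r.2 (ht i hi), by
          simp only [Finset.smul_sum, mul_smul]
          rfl⟩
      isClosed' := isClosed_nonnegSpan g s }
  obtain ⟨f, hf, hfx⟩ := C.hyperplane_separation_point hx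
  exact ⟨f, fun i hi => hf _ (mem_nonnegSpan_of_mem hi), hfx⟩

end NonnegSpan

theorem mem_nonnegSpan_of_forall_dotProduct_nonneg {ι n : Type*} [Fintype n] {g : ι → n → ℝ}
    {s : Finset ι} {x : n → ℝ} (h : ∀ d, (∀ i ∈ s, 0 ≤ g i ⬝ᵥ d) → 0 ≤ x ⬝ᵥ d) :
    x ∈ nonnegSpan g s := by
  classical
  by_contra hx
  obtain ⟨f, hf, hfx⟩ := exists_separating_of_notMem_nonnegSpan hx
  have hdot : ∀ y, y ⬝ᵥ (dotProductEquiv ℝ n).symm f.toLinearMap = f y := fun y => by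
    rw [dotProduct_comm, ← dotProductEquiv_apply_apply, LinearEquiv.apply_symm_apply]
    rfl
  have := h _ fun i hi => (hdot _).symm ▸ hf i hi
  rw [hdot] at this
  linarith

section Polyhedron

open Filter Topology

variable {m n : ℕ} {A : Matrix (Fin m) (Fin n) ℝ} {b : Fin m → ℝ}

theorem mem_polyV {v : Fin n → ℝ} : v ∈ polyV A b ↔ ∀ j, b j ≤ A j ⬝ᵥ v := Iff.rfl

theorem isCompact_polyV (hbd : Bornology.IsBounded (polyV A b)) : IsCompact (polyV A b) :=
  Metric.isCompact_of_isClosed_isBounded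
    (isClosed_le continuous_const (continuous_const.matrix_mulVec continuous_id)) hbd

theorem mem_Vstar_iff (hbd : Bornology.IsBounded (polyV A b)) {c v : Fin n → ℝ} :
    v ∈ Vstar A b c ↔ v ∈ polyV A b ∧ IsMinOn (c ⬝ᵥ ·) (polyV A b) v := by
  constructor
  · rintro ⟨hv, hz⟩
    have hbdd : BddBelow ((c ⬝ᵥ ·) '' polyV A b) :=
      ((isCompact_polyV hbd).image (continuous_const.dotProduct continuous_id)).bddBelow
    exact ⟨hv, fun u hu => hz.trans_le (csInf_le hbdd ⟨u, hu, rfl⟩)⟩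
  · rintro ⟨hv, hmin⟩
    have hleast : IsLeast ((c ⬝ᵥ ·) '' polyV A b) (c ⬝ᵥ v) :=
      ⟨⟨v, hv, rfl⟩, forall_mem_image.2 fun u hu => hmin hu⟩
    exact ⟨hv, hleast.csInf_eq.symm⟩

theorem Vstar_nonempty (hne : (polyV A b).Nonempty) (hbd : Bornology.IsBounded (polyV A b))
    (c : Fin n → ℝ) : (Vstar A b c).Nonempty := by
  obtain ⟨v, hv, hmin⟩ := (isCompact_polyV hbd).exists_isMinOn hne
    (continuous_const.dotProduct continuous_id).continuousOn
  exact ⟨v, (mem_Vstar_iff hbd).2 ⟨hv, hmin⟩⟩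

theorem dotProduct_lt_of_Vstar_eq_singleton (hbd : Bornology.IsBounded (polyV A b))
    {c v₀ v : Fin n → ℝ} (h : Vstar A b c = {v₀}) (hv : v ∈ polyV A b) (hvv₀ : v ≠ v₀) :
    c ⬝ᵥ v₀ < c ⬝ᵥ v := by
  obtain ⟨-, hmin⟩ := (mem_Vstar_iff hbd).1 (h ▸ mem_singleton v₀)
  refine (hmin hv).lt_of_ne fun heq => hvv₀ ?_
  have : v ∈ Vstar A b c := (mem_Vstar_iff hbd).2 ⟨hv, fun u hu => heq.symm.trans_le (hmin hu)⟩
  rwa [h] at this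

theorem exists_pos_add_smul_mem_polyV {v₀ d : Fin n → ℝ} (hv₀ : v₀ ∈ polyV A b)
    (hd : ∀ j, A j ⬝ᵥ v₀ = b j → 0 ≤ A j ⬝ᵥ d) : ∃ t : ℝ, 0 < t ∧ v₀ + t • d ∈ polyV A b := by
  have hrow : ∀ j, ∀ᶠ t in 𝓝[>] (0 : ℝ), b j ≤ A j ⬝ᵥ (v₀ + t • d) := by
    intro j
    simp only [dotProduct_add, dotProduct_smul, smul_eq_mul]
    rcases (mem_polyV.1 hv₀ j).eq_or_lt with hj | hj
    · filter_upwards [self_mem_nhdsWithin] with t ht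
      nlinarith [hd j hj.symm, mem_Ioi.1 ht]
    · have hlim : Tendsto (fun t : ℝ => A j ⬝ᵥ v₀ + t * (A j ⬝ᵥ d)) (𝓝 0) (𝓝 (A j ⬝ᵥ v₀)) :=
        Continuous.tendsto' (by fun_prop) 0 _ (by simp)
      exact ((hlim.eventually_const_lt hj).filter_mono nhdsWithin_le_nhds).mono fun _ => le_of_lt
  obtain ⟨t, hmem, ht⟩ := ((eventually_all.2 hrow).and self_mem_nhdsWithin).exists
  exact ⟨t, ht, hmem⟩

/-- `v₀ + t (v₀ - v) ∈ V` for small `t > 0`, so `c ⬝ᵥ (v₀ - v)` is both `≤ 0` and `≥ 0`. -/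
theorem dotProduct_eq_of_isMinOn_of_active {c v₀ v : Fin n → ℝ}
    (hv₀ : v₀ ∈ polyV A b) (hmin : IsMinOn (c ⬝ᵥ ·) (polyV A b) v₀) (hv : v ∈ polyV A b)
    (hact : ∀ j, A j ⬝ᵥ v₀ = b j → A j ⬝ᵥ v = b j) : c ⬝ᵥ v = c ⬝ᵥ v₀ := by
  obtain ⟨t, ht, hmem⟩ := exists_pos_add_smul_mem_polyV (d := v₀ - v) hv₀ fun j hj => by
    rw [dotProduct_sub, hj, hact j hj, sub_self]
  have h₁ : c ⬝ᵥ v₀ ≤ c ⬝ᵥ v := hmin hv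
  have h₂ : c ⬝ᵥ v₀ ≤ c ⬝ᵥ (v₀ + t • (v₀ - v)) := hmin hmem
  simp only [dotProduct_add, dotProduct_smul, dotProduct_sub, smul_eq_mul] at h₂
  nlinarith

end Polyhedron

section StrictlyComplementaryDual

variable {m n : ℕ} {A : Matrix (Fin m) (Fin n) ℝ} {b : Fin m → ℝ}

/-- The constraints of the linear system (2) for one observation, with `v₀ = v^i`, `c = ω x^i`. -/
def IsStrictlyComplementaryDual (A : Matrix (Fin m) (Fin n) ℝ) (b : Fin m → ℝ)
    (v₀ c : Fin n → ℝ) (ρ : Fin m → ℝ) : Prop :=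
  Aᵀ *ᵥ ρ = c ∧ (∀ j, A j ⬝ᵥ v₀ = b j → 1 ≤ ρ j) ∧ (∀ j, A j ⬝ᵥ v₀ ≠ b j → ρ j = 0)

namespace IsStrictlyComplementaryDual

variable {v₀ c : Fin n → ℝ} {ρ : Fin m → ℝ}

theorem smul (h : IsStrictlyComplementaryDual A b v₀ c ρ) {t : ℝ} (ht : 1 ≤ t) :
    IsStrictlyComplementaryDual A b v₀ (t • c) (t • ρ) := by
  obtain ⟨hc, hact, hinact⟩ := h
  refine ⟨by rw [mulVec_smul, hc], fun j hj => ?_, fun j hj => by simp [hinact j hj]⟩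
  simpa using one_le_mul_of_one_le_of_one_le ht (hact j hj)

theorem nonneg (h : IsStrictlyComplementaryDual A b v₀ c ρ) (j : Fin m) : 0 ≤ ρ j := by
  by_cases hj : A j ⬝ᵥ v₀ = b j
  · linarith [h.2.1 j hj]
  · rw [h.2.2 j hj]

theorem dotProduct_sub_eq (h : IsStrictlyComplementaryDual A b v₀ c ρ) (v : Fin n → ℝ) :
    c ⬝ᵥ v - c ⬝ᵥ v₀ = ∑ j, ρ j * (A j ⬝ᵥ v - b j) := by
  have hdot : ∀ u, c ⬝ᵥ u = ∑ j, ρ j * (A j ⬝ᵥ u) := fun u => by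
    rw [← h.1, mulVec_transpose, ← dotProduct_mulVec]
    rfl
  have hslack : ∀ j, ρ j * (A j ⬝ᵥ v₀) = ρ j * b j := fun j => by
    by_cases hj : A j ⬝ᵥ v₀ = b j
    · rw [hj]
    · simp [h.2.2 j hj]
  simp only [hdot, hslack, mul_sub, Finset.sum_sub_distrib]

theorem active_of_dotProduct_le (h : IsStrictlyComplementaryDual A b v₀ c ρ) {v : Fin n → ℝ}
    (hv : v ∈ polyV A b) (hle : c ⬝ᵥ v ≤ c ⬝ᵥ v₀) (j : Fin m) (hj : A j ⬝ᵥ v₀ = b j) :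
    A j ⬝ᵥ v = b j := by
  have hterm : ∀ k ∈ Finset.univ, 0 ≤ ρ k * (A k ⬝ᵥ v - b k) := fun k _ =>
    mul_nonneg (h.nonneg k) (sub_nonneg.2 (mem_polyV.1 hv k))
  have hsum : ∑ k, ρ k * (A k ⬝ᵥ v - b k) = 0 :=
    le_antisymm (by linarith [h.dotProduct_sub_eq v]) (Finset.sum_nonneg hterm)
  have hzero := (Finset.sum_eq_zero_iff_of_nonneg hterm).1 hsum j (Finset.mem_univ j)
  rcases mul_eq_zero.1 hzero with hρ | hAv
  · linarith [h.2.1 j hj]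
  · linarith

end IsStrictlyComplementaryDual

/-- Farkas applied to the active rows together with `-c`, with target `c - ∑_{j active} A j`;
its hypothesis holds because `d = 0` is the only direction with `A j ⬝ᵥ d ≥ 0` on the active rows
and `c ⬝ᵥ d ≤ 0`. -/
theorem exists_isStrictlyComplementaryDual_of_strictMin {c v₀ : Fin n → ℝ}
    (hv₀ : v₀ ∈ polyV A b) (hmin : ∀ v ∈ polyV A b, v ≠ v₀ → c ⬝ᵥ v₀ < c ⬝ᵥ v) :
    ∃ T : ℝ, 0 < T ∧ ∃ ρ, IsStrictlyComplementaryDual A b v₀ (T • c) ρ := by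
  classical
  set I := Finset.univ.filter fun j => A j ⬝ᵥ v₀ = b j
  have hI : ∀ j, j ∈ I ↔ A j ⬝ᵥ v₀ = b j := by simp [I]
  have hpointed : ∀ d, (∀ j ∈ I, 0 ≤ A j ⬝ᵥ d) → c ⬝ᵥ d ≤ 0 → d = 0 := by
    intro d hd hcd
    by_contra hd0
    obtain ⟨t, ht, hmem⟩ := exists_pos_add_smul_mem_polyV hv₀ fun j hj => hd j ((hI j).2 hj)
    have hlt := hmin _ hmem (by simpa [ht.ne'] using hd0)
    rw [dotProduct_add, dotProduct_smul, smul_eq_mul] at hlt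
    nlinarith
  let g : Option (Fin m) → Fin n → ℝ := fun o => o.elim (-c) A
  obtain ⟨t, ht, hsum⟩ := mem_nonnegSpan_of_forall_dotProduct_nonneg
    (g := g) (s := I.insertNone) (x := c - ∑ j ∈ I, A j) fun d hd => by
      rw [Finset.forall_mem_insertNone] at hd
      have hd0 := hpointed d hd.2 (by simpa [g, Option.elim] using hd.1)
      simp [hd0]
  rw [Finset.sum_insertNone] at hsum
  have htn : 0 ≤ t none := ht none (by simp)
  refine ⟨t none + 1, by linarith, fun j => if j ∈ I then t (some j) + 1 else 0, ?_,
    fun j hj => by simp [(hI j).2 hj, ht (some j) (Finset.some_mem_insertNone.2 ((hI j).2 hj))],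
    fun j hj => by simp [(hI j).not.2 hj]⟩
  simp only [g, Option.elim, smul_neg] at hsum
  simp only [mulVec_transpose, vecMul_eq_sum, ite_smul, zero_smul, Finset.sum_ite_mem,
    Finset.univ_inter, add_smul, one_smul]
  rw [Finset.sum_add_distrib (f := fun j => t (some j) • A j) (g := fun j => A j)]
  linear_combination (norm := module) hsum

end StrictlyComplementaryDual

theorem stmt_0 (m n N K : ℕ)
    (A : Matrix (Fin m) (Fin n) ℝ) (b : Fin m → ℝ)
    (hne : (polyV A b).Nonempty) (hbd : Bornology.IsBounded (polyV A b))
    (x : Fin N → Fin K → ℝ) (c : Fin N → Fin n → ℝ)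
    (vopt : Fin N → Fin n → ℝ)
    (hunique : ∀ i, Vstar A b (c i) = {vopt i}) :
    (∃ ω : Matrix (Fin n) (Fin K) ℝ,
        ∀ i, ∀ v ∈ Vstar A b (ω.mulVec (x i)), c i ⬝ᵥ v = zstar A b (c i)) ↔
    (∃ (ω : Matrix (Fin n) (Fin K) ℝ) (ρ : Fin N → Fin m → ℝ),
        ∀ i, Aᵀ.mulVec (ρ i) = ω.mulVec (x i) ∧
          (∀ j, A j ⬝ᵥ vopt i = b j → 1 ≤ ρ i j) ∧
          (∀ j, A j ⬝ᵥ vopt i ≠ b j → ρ i j = 0)) := by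
  have hvopt : ∀ i, vopt i ∈ Vstar A b (c i) := fun i => (hunique i).symm ▸ mem_singleton _
  constructor
  · rintro ⟨ω, hω⟩
    have hstar : ∀ i, Vstar A b (ω *ᵥ x i) = {vopt i} := fun i =>
      (Vstar_nonempty hne hbd _).subset_singleton_iff.1 fun v hv => hunique i ▸ ⟨hv.1, hω i v hv⟩
    choose T hT ρ hρ using fun i => exists_isStrictlyComplementaryDual_of_strictMin
      (hvopt i).1 fun v hv hvne => dotProduct_lt_of_Vstar_eq_singleton hbd (hstar i) hv hvne
    obtain ⟨t, ht⟩ := (finite_range T).bddAbove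
    refine ⟨t • ω, fun i => (t / T i) • ρ i, fun i => ?_⟩
    have := (hρ i).smul ((one_le_div (hT i)).2 (ht (mem_range_self i)))
    rwa [smul_smul, div_mul_cancel₀ _ (hT i).ne', ← smul_mulVec] at this
  · rintro ⟨ω, ρ, hρ⟩
    refine ⟨ω, fun i v hv => ?_⟩
    obtain ⟨hvV, hvmin⟩ := (mem_Vstar_iff hbd).1 hv
    obtain ⟨hoptV, hoptmin⟩ := (mem_Vstar_iff hbd).1 (hvopt i)
    rw [← (hvopt i).2]
    exact dotProduct_eq_of_isMinOn_of_active hoptV hoptmin hvV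
      (IsStrictlyComplementaryDual.active_of_dotProduct_le (hρ i) hvV (hvmin hoptV))
end
end

section
/- Let A be a real m×n matrix, b ∈ ℝ^m, and assume V = {v ∈ ℝ^n : A v ≥ b} is nonempty and bounded. Let (x^i, c^i), i = 1,…,N, be data with x^i ∈ ℝ^K and c^i ∈ ℝ^n. For every fixed ω ∈ ℝ^{n×K}, the pessimistic value Λ(ω) = sup{(1/N) Σ_{i=1}^N c^i · v^i : v^i ∈ V*(ω x^i) for each i} equals the minimum of Σ_{i=1}^N (b · μ^i + (ω x^i) · δ^i) over all (μ^i, δ^i, γ^i)_{i=1}^N with μ^i ∈ ℝ^m, δ^i ∈ ℝ^n, γ^i ∈ ℝ satisfying A^T μ^i + γ^i (ω x^i) = (1/N) c^i, A δ^i − γ^i b ≥ 0, μ^i ≤ 0 and γ^i ≥ 0 for all i; moreover this feasible set is nonempty and the minimum is attained. -/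
/-!
The pessimistic value splits into `N` independent linear programs
`max {(c^i / N) ⬝ᵥ v : v ∈ V*(ω x^i)}`, so it suffices to dualize one of them. Since `V` is
compact, `z*(c)` is attained and `V*(c) = V ∩ {c ⬝ᵥ v ≤ z*(c)}` is a nonempty compact polyhedron,
so LP strong duality (from Farkas' lemma, i.e. closedness of finitely generated cones via
Carathéodory) gives the dual `min {b ⬝ᵥ μ + γ z*(c) : Aᵀ μ + γ c = d, μ ≤ 0, γ ≥ 0}`. Finally
`γ z*(c)` is the minimum of `c ⬝ᵥ δ` over the homogenized constraint `γ b ≤ A δ`, which removes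
`z*(c)` from the dual.
-/

open Matrix Set BigOperators

noncomputable section

/-- The pessimistic value `Λ(ω)` of the linear model `ω`. -/
noncomputable def pessValue {m n N K : ℕ} (A : Matrix (Fin m) (Fin n) ℝ) (b : Fin m → ℝ)
    (x : Fin N → Fin K → ℝ) (c : Fin N → Fin n → ℝ)
    (ω : Matrix (Fin n) (Fin K) ℝ) : ℝ :=
  sSup {r : ℝ | ∃ v : Fin N → Fin n → ℝ,
    (∀ i, v i ∈ Vstar A b (ω.mulVec (x i))) ∧
    r = (1 / (N : ℝ)) * ∑ i, c i ⬝ᵥ v i}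

section ConicHull

variable {E κ : Type*}

lemma PointedCone.mem_hull_range_iff [AddCommMonoid E] [Module ℝ E] [Fintype κ] {g : κ → E}
    {x : E} : x ∈ PointedCone.hull ℝ (range g) ↔ ∃ t : κ → ℝ, 0 ≤ t ∧ ∑ j, t j • g j = x := by
  rw [Submodule.mem_span_range_iff_exists_fun]
  constructor
  · rintro ⟨t, rfl⟩
    exact ⟨fun j => t j, fun j => (t j).2, rfl⟩
  · rintro ⟨t, ht, rfl⟩
    exact ⟨fun j => ⟨t j, ht j⟩, rfl⟩

/-- Carathéodory's theorem for cones. -/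
lemma exists_linearIndepOn_nonneg_sum_eq [AddCommGroup E] [Module ℝ E] [DecidableEq κ]
    (g : κ → E) (s : Finset κ) (t : κ → ℝ) (ht : ∀ j ∈ s, 0 ≤ t j) :
    ∃ s' ⊆ s, LinearIndepOn ℝ g (s' : Set κ) ∧
      ∃ t' : κ → ℝ, (∀ j ∈ s', 0 ≤ t' j) ∧ ∑ j ∈ s', t' j • g j = ∑ j ∈ s, t j • g j := by
  induction s using Finset.strongInduction generalizing t with
  | _ s ih =>
  by_cases hli : LinearIndepOn ℝ g (s : Set κ)
  · exact ⟨s, subset_rfl, hli, t, ht, rfl⟩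
  obtain ⟨f, hf, hpos⟩ : ∃ f : κ → ℝ, ∑ j ∈ s, f j • g j = 0 ∧ ∃ j ∈ s, 0 < f j := by
    obtain ⟨f, hf, i, hi, hfi⟩ := not_linearIndepOn_finset_iff.1 hli
    rcases hfi.lt_or_gt with hneg | hpos
    · exact ⟨-f, by simp [neg_smul, hf], i, hi, by simpa using hneg⟩
    · exact ⟨f, hf, i, hi, hpos⟩
  -- Move along the relation `f` until the first coefficient of `t` vanishes.
  obtain ⟨j₀, hj₀, hmin⟩ := Finset.exists_min_image {j ∈ s | 0 < f j} (fun j => t j / f j)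
    (by simpa [Finset.Nonempty] using hpos)
  rw [Finset.mem_filter] at hj₀
  set t' : κ → ℝ := fun j => t j - t j₀ / f j₀ * f j
  have ht' : ∀ j ∈ s, 0 ≤ t' j := by
    intro j hj
    rcases lt_or_ge 0 (f j) with hfj | hfj
    · have := (le_div_iff₀ hfj).1 (hmin j (Finset.mem_filter.2 ⟨hj, hfj⟩))
      simp only [t']
      linarith
    · have : t j₀ / f j₀ * f j ≤ 0 :=
        mul_nonpos_of_nonneg_of_nonpos (div_nonneg (ht j₀ hj₀.1) hj₀.2.le) hfj
      simp only [t']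
      linarith [ht j hj]
  have hsum : ∑ j ∈ s.erase j₀, t' j • g j = ∑ j ∈ s, t j • g j := by
    rw [Finset.sum_erase _ (by simp [t', div_mul_cancel₀ _ hj₀.2.ne'])]
    simp [t', sub_smul, Finset.sum_sub_distrib, mul_smul, ← Finset.smul_sum, hf]
  obtain ⟨s', hs', hli', t'', ht'', hsum'⟩ := ih _ (Finset.erase_ssubset hj₀.1) t'
    fun j hj => ht' j (Finset.mem_of_mem_erase hj)
  exact ⟨s', hs'.trans (Finset.erase_subset _ _), hli', t'', ht'', hsum'.trans hsum⟩

lemma PointedCone.hull_range_eq_iUnion [AddCommGroup E] [Module ℝ E] [Fintype κ]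
    [DecidableEq κ] (g : κ → E) :
    (PointedCone.hull ℝ (range g) : Set E) =
      ⋃ (s : Finset κ) (_ : LinearIndepOn ℝ g (s : Set κ)), PointedCone.hull ℝ (g '' s) := by
  refine Subset.antisymm (fun x hx => ?_) (iUnion₂_subset fun (s : Finset κ) _ =>
    Submodule.span_mono (R := {c : ℝ // 0 ≤ c}) (image_subset_range g s))
  obtain ⟨t, ht, rfl⟩ := PointedCone.mem_hull_range_iff.1 hx
  obtain ⟨s, -, hli, t', ht', hsum⟩ :=
    exists_linearIndepOn_nonneg_sum_eq g Finset.univ t fun j _ => ht j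
  refine Set.mem_iUnion₂.2 ⟨s, hli, ?_⟩
  rw [SetLike.mem_coe, ← hsum]
  exact Submodule.sum_mem _ fun j hj =>
    PointedCone.smul_mem _ (ht' j hj) (PointedCone.subset_hull (mem_image_of_mem g hj))

variable [AddCommGroup E] [TopologicalSpace E] [IsTopologicalAddGroup E] [Module ℝ E]
  [ContinuousSMul ℝ E] [T2Space E]

lemma PointedCone.isClosed_hull_range_of_linearIndependent [Fintype κ] {g : κ → E}
    (hg : LinearIndependent ℝ g) : IsClosed (PointedCone.hull ℝ (range g) : Set E) := by
  have heq : (PointedCone.hull ℝ (range g) : Set E) = Fintype.linearCombination ℝ g '' Ici 0 := by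
    ext x
    simp [PointedCone.mem_hull_range_iff, Fintype.linearCombination_apply]
  rw [heq]
  exact (LinearMap.isClosedEmbedding_of_injective
    (LinearMap.ker_eq_bot.2 hg.fintypeLinearCombination_injective)).isClosedMap _ isClosed_Ici

lemma PointedCone.isClosed_hull_range [Finite κ] (g : κ → E) :
    IsClosed (PointedCone.hull ℝ (range g) : Set E) := by
  classical
  have := Fintype.ofFinite κ
  rw [PointedCone.hull_range_eq_iUnion]
  refine isClosed_iUnion_of_finite fun s => isClosed_iUnion_of_finite fun hli => ?_
  rw [image_eq_range]
  exact PointedCone.isClosed_hull_range_of_linearIndependent hli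

end ConicHull

section LinearProgramming

variable {ρ ι : Type*} [Fintype ι]

/-- Farkas' lemma. -/
theorem Matrix.exists_nonneg_vecMul_eq_or_exists_mulVec_nonneg [Fintype ρ] (M : Matrix ρ ι ℝ)
    (d : ι → ℝ) :
    (∃ y, 0 ≤ y ∧ y ᵥ* M = d) ∨ ∃ z, 0 ≤ M *ᵥ z ∧ d ⬝ᵥ z < 0 := by
  refine or_iff_not_imp_left.2 fun hd => ?_
  let C : ProperCone ℝ (EuclideanSpace ℝ ι) :=
    ⟨PointedCone.hull ℝ (range fun k => WithLp.toLp 2 (M k)), PointedCone.isClosed_hull_range _⟩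
  have hdC : WithLp.toLp 2 d ∉ C := by
    intro hmem
    obtain ⟨y, hy, hyd⟩ := PointedCone.mem_hull_range_iff.1 hmem
    refine hd ⟨y, hy, ?_⟩
    rw [vecMul_eq_sum, ← WithLp.toLp_injective 2 |>.eq_iff, WithLp.toLp_sum, ← hyd]
    rfl
  obtain ⟨z, hzC, hzd⟩ := C.hyperplane_separation' hdC
  refine ⟨z.ofLp, fun k => ?_, ?_⟩
  · have := hzC _ (PointedCone.subset_hull ⟨k, rfl⟩)
    simpa [EuclideanSpace.inner_eq_star_dotProduct, mulVec, dotProduct_comm] using this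
  · simpa [EuclideanSpace.inner_eq_star_dotProduct, dotProduct_comm] using hzd

lemma dotProduct_mulVec_le_of_nonpos [Fintype ρ] {A : Matrix ρ ι ℝ} {b μ : ρ → ℝ} {v : ι → ℝ}
    (hμ : μ ≤ 0) (hv : b ≤ A *ᵥ v) : μ ⬝ᵥ A *ᵥ v ≤ μ ⬝ᵥ b := by
  have := dotProduct_le_dotProduct_of_nonneg_left hv (neg_nonneg.2 hμ)
  rwa [neg_dotProduct, neg_dotProduct, neg_le_neg_iff] at this

lemma le_mulVec_inv_one_add_smul_add {A : Matrix ρ ι ℝ} {b : ρ → ℝ} {v z : ι → ℝ} {τ : ℝ}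
    (hv : b ≤ A *ᵥ v) (hz : τ • b ≤ A *ᵥ z) (hτ : 0 ≤ τ) :
    b ≤ A *ᵥ ((1 + τ)⁻¹ • (v + z)) := by
  intro i
  have hvi := hv i
  have hzi := hz i
  simp only [Pi.smul_apply, smul_eq_mul, mulVec_smul, mulVec_add, Pi.add_apply] at hzi ⊢
  rw [le_inv_mul_iff₀ (by positivity)]
  linarith

/-- Strong duality for `max {d ⬝ᵥ v : b ≤ A *ᵥ v}`, whose dual is
`min {b ⬝ᵥ μ : μ ᵥ* A = d, μ ≤ 0}`. -/
theorem exists_dual_eq_of_isMaxOn [Fintype ρ] {A : Matrix ρ ι ℝ} {b : ρ → ℝ} {d v₀ : ι → ℝ}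
    (hv₀ : b ≤ A *ᵥ v₀) (hmax : IsMaxOn (d ⬝ᵥ ·) {v | b ≤ A *ᵥ v} v₀) :
    ∃ μ, μ ≤ 0 ∧ μ ᵥ* A = d ∧ b ⬝ᵥ μ = d ⬝ᵥ v₀ := by
  -- Farkas' lemma for the homogenized system, whose last column and row carry `b` and `d ⬝ᵥ v₀`.
  set p := d ⬝ᵥ v₀
  obtain ⟨u, hu, hud⟩ | ⟨w, hw, hwd⟩ := exists_nonneg_vecMul_eq_or_exists_mulVec_nonneg
    (fromBlocks A (replicateCol Unit (-b)) 0 (1 : Matrix Unit Unit ℝ)) (Sum.elim (-d) fun _ => p)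
  · obtain ⟨y, σ, rfl⟩ : ∃ y σ, u = Sum.elim y fun _ => σ :=
      ⟨u ∘ Sum.inl, u (Sum.inr ()), by ext (_ | _) <;> rfl⟩
    have hA : y ᵥ* A = -d := by simpa [vecMul_fromBlocks] using congrArg (· ∘ Sum.inl) hud
    have hb : -(y ⬝ᵥ b) + σ = p := by
      simpa [vecMul_fromBlocks, mulVec_replicateCol_eq_const] using congrFun hud (Sum.inr ())
    have hy₀ : 0 ≤ y := fun i => hu (Sum.inl i)
    have hσ : 0 ≤ σ := hu (Sum.inr ())
    have hμ : -y ᵥ* A = d := by rw [neg_vecMul, hA, neg_neg]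
    refine ⟨-y, neg_nonpos.2 hy₀, hμ, le_antisymm ?_ ?_⟩
    · rw [dotProduct_neg, dotProduct_comm]
      linarith
    · calc p = -y ⬝ᵥ A *ᵥ v₀ := by rw [dotProduct_mulVec, hμ]
        _ ≤ -y ⬝ᵥ b := dotProduct_mulVec_le_of_nonpos (neg_nonpos.2 hy₀) hv₀
        _ = b ⬝ᵥ -y := dotProduct_comm _ _
  · obtain ⟨z, τ, rfl⟩ : ∃ z τ, w = Sum.elim z fun _ => τ :=
      ⟨w ∘ Sum.inl, w (Sum.inr ()), by ext (_ | _) <;> rfl⟩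
    have hz : τ • b ≤ A *ᵥ z := fun i => by
      simpa [fromBlocks_mulVec, mulVec, dotProduct, mul_comm] using hw (Sum.inl i)
    have hτ : 0 ≤ τ := by simpa [fromBlocks_mulVec] using hw (Sum.inr ())
    have hzd : p * τ < d ⬝ᵥ z := by simpa [sumElim_dotProduct_sumElim] using hwd
    -- `(v₀ + z) / (1 + τ)` would beat the maximum `p`.
    have hle : d ⬝ᵥ ((1 + τ)⁻¹ • (v₀ + z)) ≤ p :=
      hmax (le_mulVec_inv_one_add_smul_add hv₀ hz hτ)
    rw [dotProduct_smul, dotProduct_add, smul_eq_mul, inv_mul_le_iff₀ (by positivity)] at hle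
    linarith

end LinearProgramming

section PessimisticValue

variable {m n : ℕ} {A : Matrix (Fin m) (Fin n) ℝ} {b : Fin m → ℝ}

lemma isClosed_setOf_le_mulVec {ρ ι : Type*} [Fintype ι] (A : Matrix ρ ι ℝ) (b : ρ → ℝ) :
    IsClosed {v | b ≤ A *ᵥ v} :=
  isClosed_le continuous_const (continuous_const.matrix_mulVec continuous_id)

lemma isLeast_zstar (hne : (polyV A b).Nonempty) (hbd : Bornology.IsBounded (polyV A b))
    (c : Fin n → ℝ) : IsLeast ((c ⬝ᵥ ·) '' polyV A b) (zstar A b c) :=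
  ((Metric.isCompact_of_isClosed_isBounded (isClosed_setOf_le_mulVec A b) hbd).image
    (continuous_const.dotProduct continuous_id)).isLeast_sInf (hne.image _)

lemma Vstar_eq_setOf_le_mulVec {c : Fin n → ℝ}
    (hz : IsLeast ((c ⬝ᵥ ·) '' polyV A b) (zstar A b c)) :
    Vstar A b c =
      {v | Sum.elim b (fun _ => -zstar A b c) ≤ fromRows A (replicateRow Unit (-c)) *ᵥ v} := by
  ext v
  simp only [Vstar, mem_ofPred_eq, fromRows_mulVec, Sum.elim_le_elim_iff]
  refine and_congr_right fun hv => ?_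
  simp only [replicateRow_mulVec_eq_const, neg_dotProduct, Pi.le_def, Function.const_apply,
    neg_le_neg_iff, forall_const]
  exact ⟨le_of_eq, fun h => h.antisymm (hz.2 ⟨v, hv, rfl⟩)⟩

/-- Feasibility of `(μ, δ, γ)` for the dual of `max {d ⬝ᵥ v : v ∈ V*(c)}`. The term `γ * z*(c)` of
the dual objective is replaced by `c ⬝ᵥ δ` over `δ` with `δ / γ ∈ V`, whose minimum it is. -/
def IsDualFeasible (A : Matrix (Fin m) (Fin n) ℝ) (b : Fin m → ℝ) (c d : Fin n → ℝ)
    (μ : Fin m → ℝ) (δ : Fin n → ℝ) (γ : ℝ) : Prop :=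
  Aᵀ *ᵥ μ + γ • c = d ∧ γ • b ≤ A *ᵥ δ ∧ μ ≤ 0 ∧ 0 ≤ γ

variable {c d : Fin n → ℝ}

lemma mul_zstar_le_dotProduct (hz : IsLeast ((c ⬝ᵥ ·) '' polyV A b) (zstar A b c))
    {δ : Fin n → ℝ} {γ : ℝ} (hδ : γ • b ≤ A *ᵥ δ) (hγ : 0 ≤ γ) : γ * zstar A b c ≤ c ⬝ᵥ δ := by
  obtain ⟨v, hv, hvz⟩ : ∃ v ∈ polyV A b, c ⬝ᵥ v = zstar A b c := hz.1
  have : zstar A b c ≤ c ⬝ᵥ ((1 + γ)⁻¹ • (v + δ)) :=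
    hz.2 ⟨_, le_mulVec_inv_one_add_smul_add hv hδ hγ, rfl⟩
  rw [dotProduct_smul, dotProduct_add, hvz, smul_eq_mul, le_inv_mul_iff₀ (by positivity)] at this
  linarith

lemma dotProduct_le_of_isDualFeasible (hz : IsLeast ((c ⬝ᵥ ·) '' polyV A b) (zstar A b c))
    {v : Fin n → ℝ} (hv : v ∈ Vstar A b c) {μ : Fin m → ℝ} {δ : Fin n → ℝ} {γ : ℝ}
    (h : IsDualFeasible A b c d μ δ γ) : d ⬝ᵥ v ≤ b ⬝ᵥ μ + c ⬝ᵥ δ := by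
  obtain ⟨hd, hδ, hμ, hγ⟩ := h
  calc d ⬝ᵥ v = μ ⬝ᵥ A *ᵥ v + γ * zstar A b c := by
        rw [← hd, add_dotProduct, mulVec_transpose, ← dotProduct_mulVec, smul_dotProduct, hv.2,
          smul_eq_mul]
    _ ≤ μ ⬝ᵥ b + c ⬝ᵥ δ :=
        add_le_add (dotProduct_mulVec_le_of_nonpos hμ hv.1) (mul_zstar_le_dotProduct hz hδ hγ)
    _ = b ⬝ᵥ μ + c ⬝ᵥ δ := by rw [dotProduct_comm]

lemma exists_isDualFeasible_eq (hz : IsLeast ((c ⬝ᵥ ·) '' polyV A b) (zstar A b c))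
    {v₀ : Fin n → ℝ} (hv₀ : v₀ ∈ Vstar A b c) (hmax : IsMaxOn (d ⬝ᵥ ·) (Vstar A b c) v₀) :
    ∃ μ δ γ, IsDualFeasible A b c d μ δ γ ∧ b ⬝ᵥ μ + c ⬝ᵥ δ = d ⬝ᵥ v₀ := by
  rw [Vstar_eq_setOf_le_mulVec hz] at hv₀ hmax
  obtain ⟨μ', hμ', hμ'd, hval⟩ := exists_dual_eq_of_isMaxOn hv₀ hmax
  obtain ⟨μ, γ, rfl⟩ : ∃ μ γ, μ' = Sum.elim μ fun _ => -γ :=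
    ⟨μ' ∘ Sum.inl, -μ' (Sum.inr ()), by ext (_ | _) <;> simp⟩
  obtain ⟨v₁, hv₁, hv₁z⟩ : ∃ v ∈ polyV A b, c ⬝ᵥ v = zstar A b c := hz.1
  have hγ : 0 ≤ γ := by simpa using hμ' (Sum.inr ())
  refine ⟨μ, γ • v₁, γ, ⟨?_, ?_, fun i => hμ' (Sum.inl i), hγ⟩, ?_⟩
  · ext j
    simp [mulVec_transpose, ← hμ'd, vecMul_fromRows, vecMul, dotProduct]
  · rw [mulVec_smul]
    exact smul_le_smul_of_nonneg_left hv₁ hγ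
  · rw [← hval, sumElim_dotProduct_sumElim, dotProduct_smul, hv₁z, smul_eq_mul]
    simp [dotProduct, mul_comm]

theorem exists_isGreatest_Vstar_isLeast_dual (hne : (polyV A b).Nonempty)
    (hbd : Bornology.IsBounded (polyV A b)) (c d : Fin n → ℝ) :
    ∃ q, IsGreatest ((d ⬝ᵥ ·) '' Vstar A b c) q ∧
      IsLeast {r | ∃ μ δ γ, IsDualFeasible A b c d μ δ γ ∧ r = b ⬝ᵥ μ + c ⬝ᵥ δ} q := by
  have hz := isLeast_zstar hne hbd c
  have hcpt : IsCompact (Vstar A b c) :=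
    Metric.isCompact_of_isClosed_isBounded
      (Vstar_eq_setOf_le_mulVec hz ▸ isClosed_setOf_le_mulVec _ _) (hbd.subset fun _ hv => hv.1)
  obtain ⟨v₀, hv₀, hmax⟩ :=
    hcpt.exists_isMaxOn hz.1 (continuous_const.dotProduct continuous_id).continuousOn
  obtain ⟨μ, δ, γ, hfeas, hval⟩ := exists_isDualFeasible_eq hz hv₀ hmax
  refine ⟨d ⬝ᵥ v₀, ⟨mem_image_of_mem _ hv₀, ?_⟩, ⟨μ, δ, γ, hfeas, hval.symm⟩, ?_⟩
  · rintro _ ⟨v, hv, rfl⟩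
    exact hmax hv
  · rintro _ ⟨μ', δ', γ', hfeas', rfl⟩
    exact dotProduct_le_of_isDualFeasible hz hv₀ hfeas'

end PessimisticValue

theorem stmt_4 (m n N K : ℕ)
    (A : Matrix (Fin m) (Fin n) ℝ) (b : Fin m → ℝ)
    (hne : (polyV A b).Nonempty) (hbd : Bornology.IsBounded (polyV A b))
    (x : Fin N → Fin K → ℝ) (c : Fin N → Fin n → ℝ)
    (ω : Matrix (Fin n) (Fin K) ℝ) :
    IsLeast {r : ℝ | ∃ (μ : Fin N → Fin m → ℝ) (δ : Fin N → Fin n → ℝ) (γ : Fin N → ℝ),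
        (∀ i, Aᵀ.mulVec (μ i) + γ i • ω.mulVec (x i) = (1 / (N : ℝ)) • c i ∧
          γ i • b ≤ A.mulVec (δ i) ∧ μ i ≤ 0 ∧ 0 ≤ γ i) ∧
        r = ∑ i, (b ⬝ᵥ μ i + ω.mulVec (x i) ⬝ᵥ δ i)}
      (pessValue A b x c ω) := by
  choose q hq using fun i =>
    exists_isGreatest_Vstar_isLeast_dual hne hbd (ω *ᵥ x i) ((1 / (N : ℝ)) • c i)
  have hpess : pessValue A b x c ω = ∑ i, q i := by
    refine IsGreatest.csSup_eq ⟨?_, ?_⟩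
    · choose v hv hvq using fun i => (hq i).1.1
      refine ⟨v, hv, ?_⟩
      simp only [Finset.mul_sum, ← hvq, smul_dotProduct, smul_eq_mul]
    · rintro _ ⟨v, hv, rfl⟩
      rw [Finset.mul_sum]
      refine Finset.sum_le_sum fun i _ => ?_
      rw [← smul_eq_mul, ← smul_dotProduct]
      exact (hq i).1.2 ⟨v i, hv i, rfl⟩
  rw [hpess]
  constructor
  · choose μ δ γ hfeas hval using fun i => (hq i).2.1
    exact ⟨μ, δ, γ, hfeas, Finset.sum_congr rfl fun i _ => hval i⟩
  · rintro _ ⟨μ, δ, γ, hfeas, rfl⟩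
    exact Finset.sum_le_sum fun i _ => (hq i).2.2 ⟨μ i, δ i, γ i, hfeas i, rfl⟩
end
end

section
/- Let A be a real m×n matrix with rows a_1,…,a_m, b ∈ ℝ^m, and assume V = {v ∈ ℝ^n : A v ≥ b} is nonempty and bounded. Let c ∈ ℝ^n and suppose the set of minimizers of v ↦ c · v over V is a singleton {v*}. Then there exists ρ ∈ ℝ^m with ρ ≥ 0, A^T ρ = c, and such that for every index j: ρ_j > 0 if and only if a_j · v* = b_j (a strictly complementary dual optimal solution). -/
/-!
If `v*` is the unique minimizer, then no nonzero direction `x` that keeps the active constraints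
satisfied (`a_j ⬝ x ≥ 0` for active `j`) can have `c ⬝ x ≤ 0`: a small step along `x` would stay
feasible and be optimal as well. By a strict (Stiemke-type) form of Farkas' lemma this says that
`c` is a combination of the active rows with strictly positive coefficients; extending these
coefficients by zero gives `ρ`. The strict form follows from Farkas' lemma applied to a homogenized
system.
-/

open Matrix Set BigOperators

noncomputable section

section ConicCaratheodory

open Finset

variable {ι E : Type*} [Fintype ι] [AddCommGroup E] [Module ℝ E]

theorem exists_nonneg_sum_smul_eq_of_card_support_lt (v : ι → E) {c g : ι → ℝ} (hc : 0 ≤ c)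
    (hg : ∑ i, g i • v i = 0) (hgc : ∀ i, c i = 0 → g i = 0) (hg₀ : g ≠ 0) :
    ∃ c' : ι → ℝ, 0 ≤ c' ∧ ∑ i, c' i • v i = ∑ i, c i • v i ∧
      #{i | c' i ≠ 0} < #{i | c i ≠ 0} := by
  wlog hpos : ∃ i, 0 < g i generalizing g
  · refine this (g := -g) (by simp [hg]) (fun i hi => by simp [hgc i hi]) (neg_ne_zero.2 hg₀) ?_
    obtain ⟨i, hi⟩ := Function.ne_iff.1 hg₀
    exact ⟨i, by simpa using (not_lt.1 fun h => hpos ⟨i, h⟩).lt_of_ne hi⟩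
  obtain ⟨i₀, hi₀, hmin⟩ := ({i | 0 < g i} : Finset ι).exists_min_image (fun i => c i / g i)
    (by simpa [Finset.Nonempty] using hpos)
  simp only [mem_filter_univ] at hi₀
  -- Moving along `-g` until the first coordinate hits zero keeps `c` nonnegative.
  set t := c i₀ / g i₀
  refine ⟨c - t • g, fun i => ?_, ?_, card_lt_card ?_⟩
  · rcases le_or_gt (g i) 0 with hgi | hgi
    · have : t * g i ≤ 0 := mul_nonpos_of_nonneg_of_nonpos (div_nonneg (hc i₀) hi₀.le) hgi
      have hci : 0 ≤ c i := hc i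
      simp only [Pi.zero_apply, Pi.sub_apply, Pi.smul_apply, smul_eq_mul]
      linarith
    · have := (le_div_iff₀ hgi).1 (hmin i (by simpa using hgi))
      simp only [Pi.zero_apply, Pi.sub_apply, Pi.smul_apply, smul_eq_mul]
      linarith
  · simp [sub_smul, mul_smul, sum_sub_distrib, ← smul_sum, hg]
  · refine (Finset.ssubset_iff_of_subset fun i => ?_).2 ⟨i₀, ?_, ?_⟩
    · simp only [mem_filter_univ]
      intro h hci
      simp [hci, hgc i hci] at h
    · simpa [mem_filter_univ] using fun h => hi₀.ne' (hgc i₀ h)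
    · simp [t, div_mul_cancel₀ _ hi₀.ne']

theorem exists_nonneg_linearIndepOn_sum_smul_eq (v : ι → E) (c : ι → ℝ) (hc : 0 ≤ c) :
    ∃ c' : ι → ℝ, 0 ≤ c' ∧ LinearIndepOn ℝ v (({i | c' i ≠ 0} : Finset ι) : Set ι) ∧
      ∑ i, c' i • v i = ∑ i, c i • v i := by
  induction hn : #{i | c i ≠ 0} using Nat.strong_induction_on generalizing c with
  | _ n ih =>
  by_cases hli : LinearIndepOn ℝ v (({i | c i ≠ 0} : Finset ι) : Set ι)
  · exact ⟨c, hc, hli, rfl⟩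
  obtain ⟨g, hg, i, hi, hgi⟩ := not_linearIndepOn_finset_iff.1 hli
  classical
  let g' : ι → ℝ := fun i => if c i ≠ 0 then g i else 0
  have hg' : ∑ i, g' i • v i = 0 := by
    simpa [g', ite_smul, sum_filter] using hg
  obtain ⟨c₁, hc₁, hsum₁, hcard₁⟩ := exists_nonneg_sum_smul_eq_of_card_support_lt v hc hg'
    (fun i h => by simp [g', h]) (Function.ne_iff.2 ⟨i, by simp_all [g']⟩)
  obtain ⟨c₂, hc₂, hli₂, hsum₂⟩ := ih _ (hn ▸ hcard₁) c₁ hc₁ rfl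
  exact ⟨c₂, hc₂, hli₂, hsum₂.trans hsum₁⟩

variable [TopologicalSpace E] [T2Space E] [IsTopologicalAddGroup E] [ContinuousSMul ℝ E]

theorem isClosed_image_linearCombination_nonneg (v : ι → E) :
    IsClosed (Fintype.linearCombination ℝ v '' Ici 0) := by
  classical
  set L := Fintype.linearCombination ℝ v
  let W : Finset ι → Submodule ℝ (ι → ℝ) := fun s => Submodule.pi (↑s)ᶜ fun _ => ⊥
  have hW : ∀ s c, c ∈ W s ↔ ∀ i ∉ s, c i = 0 := by simp [W, Submodule.mem_pi]
  -- By Carathéodory, the cone is the union of the cones over linearly independent subfamilies.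
  have hcone : L '' Ici 0 = ⋃ s ∈ {s : Finset ι | LinearIndepOn ℝ v (s : Set ι)},
      (L ∘ₗ (W s).subtype) '' (Subtype.val ⁻¹' Ici 0) := by
    ext x
    simp only [Set.mem_iUnion, Set.mem_image, Set.mem_preimage, Set.mem_Ici, Set.mem_ofPred_eq,
      LinearMap.coe_comp, Function.comp_apply, Submodule.coe_subtype, exists_prop]
    constructor
    · rintro ⟨c, hc, rfl⟩
      obtain ⟨c', hc', hli, hsum⟩ := exists_nonneg_linearIndepOn_sum_smul_eq v c hc
      exact ⟨_, hli, ⟨c', (hW _ _).2 fun i hi => by simpa using hi⟩, hc',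
        by simpa [L, Fintype.linearCombination_apply] using hsum⟩
    · rintro ⟨s, -, c, hc, rfl⟩
      exact ⟨c, hc, rfl⟩
  rw [hcone]
  refine (Set.toFinite _).isClosed_biUnion fun s hs => ?_
  have hinj : LinearMap.ker (L ∘ₗ (W s).subtype) = ⊥ := by
    refine LinearMap.ker_eq_bot'.2 fun c hc => Subtype.ext (funext fun i => ?_)
    by_cases hi : i ∈ s
    · refine linearIndepOn_finset_iff.1 hs c ?_ i hi
      rw [← hc]
      simp only [L, LinearMap.comp_apply, Submodule.subtype_apply, Fintype.linearCombination_apply]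
      exact Finset.sum_subset (Finset.subset_univ s) fun j _ hj => by simp [(hW s c).1 c.2 j hj]
    · exact (hW s c).1 c.2 i hi
  exact (LinearMap.isClosedEmbedding_of_injective hinj).isClosedMap _
    (isClosed_Ici.preimage continuous_subtype_val)

end ConicCaratheodory

namespace Matrix

theorem transpose_mulVec_dite {ι κ R : Type*} [Fintype ι] [CommSemiring R] {p : ι → Prop}
    [DecidablePred p] (A : Matrix ι κ R) (y : Subtype p → R) :
    Aᵀ *ᵥ (fun i => if h : p i then y ⟨i, h⟩ else 0) = (A.submatrix Subtype.val id)ᵀ *ᵥ y := by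
  rw [mulVec_transpose, mulVec_transpose, vecMul_eq_sum, vecMul_eq_sum,
    ← Fintype.sum_subtype_add_sum_subtype p, Fintype.sum_eq_zero (fun i : {i // ¬p i} => _)
      fun i => by simp [i.2], add_zero]
  exact Fintype.sum_congr _ _ fun i => by rw [dif_pos i.2]; rfl

variable {ι κ : Type*} [Fintype ι] [Fintype κ]

theorem exists_nonneg_transpose_mulVec_eq (M : Matrix ι κ ℝ) (d : κ → ℝ)
    (h : ∀ x, 0 ≤ M *ᵥ x → 0 ≤ d ⬝ᵥ x) : ∃ y, 0 ≤ y ∧ Mᵀ *ᵥ y = d := by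
  classical
  set L := Fintype.linearCombination ℝ fun i => M i
  have hL : ∀ y, L y = Mᵀ *ᵥ y := fun y => by
    rw [Fintype.linearCombination_apply, mulVec_transpose, vecMul_eq_sum]
  by_contra! hd
  let K : ProperCone ℝ (κ → ℝ) :=
    ⟨(PointedCone.positive ℝ (ι → ℝ)).map L, isClosed_image_linearCombination_nonneg _⟩
  have hdK : d ∉ K := by
    rintro ⟨y, hy, rfl⟩
    exact hd y hy (hL y).symm
  obtain ⟨f, hfK, hfd⟩ := K.hyperplane_separation_point hdK
  set x : κ → ℝ := fun k => f fun j => if k = j then 1 else 0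
  have hf : ∀ z, f z = z ⬝ᵥ x := fun z => by
    rw [← ContinuousLinearMap.coe_coe, LinearMap.pi_apply_eq_sum_univ]
    rfl
  refine (h x fun i => ?_).not_gt (by rwa [hf] at hfd)
  have := hfK (M i) ⟨Pi.single i 1, by simp, by simp [L]⟩
  rwa [hf] at this

theorem exists_nonneg_transpose_mulVec_eq_smul_add (M : Matrix ι κ ℝ) (d e : κ → ℝ)
    (h : ∀ x, 0 ≤ M *ᵥ x → d ⬝ᵥ x ≤ 0 → 0 ≤ e ⬝ᵥ x) :
    ∃ y, 0 ≤ y ∧ ∃ s : ℝ, 0 ≤ s ∧ Mᵀ *ᵥ y = s • d + e := by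
  obtain ⟨z, hz, hNz⟩ := exists_nonneg_transpose_mulVec_eq (fromRows M (replicateRow Unit (-d))) e
    fun x hx => h x (fun i => by simpa [fromRows_mulVec] using hx (.inl i))
      (by simpa [fromRows_mulVec, replicateRow_mulVec_eq_const] using hx (.inr ()))
  refine ⟨z ∘ .inl, fun i => hz _, z (.inr ()), hz _, ?_⟩
  rw [← hNz, mulVec_transpose, mulVec_transpose, vecMul_fromRows]
  ext k
  simp [replicateRow, vecMul, dotProduct]

theorem exists_pos_transpose_mulVec_eq (M : Matrix ι κ ℝ) (d : κ → ℝ)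
    (h : ∀ x, 0 ≤ M *ᵥ x → d ⬝ᵥ x ≤ 0 → x = 0) : ∃ y, (∀ i, 0 < y i) ∧ Mᵀ *ᵥ y = d := by
  obtain ⟨y₀, hy₀, hMy₀⟩ := exists_nonneg_transpose_mulVec_eq M d fun x hx => by
    by_contra! hdx
    simp [h x hx hdx.le] at hdx
  obtain ⟨z, hz, s, hs, hMz⟩ := exists_nonneg_transpose_mulVec_eq_smul_add M d (-(Mᵀ *ᵥ 1))
    fun x hx hdx => by simp [h x hx hdx]
  -- `Mᵀ (z + 1) = s • d`, so `(y₀ + z + 1) / (1 + s)` is a strictly positive solution.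
  refine ⟨(1 + s)⁻¹ • (y₀ + z + 1), fun i => ?_, ?_⟩
  · have hy₀i : 0 ≤ y₀ i := hy₀ i
    have hzi : 0 ≤ z i := hz i
    simp only [Pi.smul_apply, Pi.add_apply, Pi.one_apply, smul_eq_mul]
    exact mul_pos (inv_pos.2 (by linarith)) (by linarith)
  · rw [mulVec_smul, mulVec_add, mulVec_add, hMy₀, hMz, inv_smul_eq_iff₀ (by linarith)]
    module

end Matrix

open Filter Topology in
theorem exists_pos_add_smul_mem_polyV_s11 {m n : ℕ} (A : Matrix (Fin m) (Fin n) ℝ) (b : Fin m → ℝ)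
    {v x : Fin n → ℝ} (hv : v ∈ polyV A b) (hx : ∀ j, A j ⬝ᵥ v = b j → 0 ≤ A j ⬝ᵥ x) :
    ∃ ε : ℝ, 0 < ε ∧ v + ε • x ∈ polyV A b := by
  have hε : ∀ᶠ ε in 𝓝[>] (0 : ℝ), ∀ j, b j ≤ A j ⬝ᵥ v + ε * (A j ⬝ᵥ x) := by
    refine eventually_all.2 fun j => ?_
    rcases (hv j).eq_or_lt with hj | hj
    · filter_upwards [self_mem_nhdsWithin] with ε hε
      have hbj : b j = A j ⬝ᵥ v := hj
      nlinarith [mul_nonneg hε.le (hx j hbj.symm)]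
    · have hcont : Continuous fun ε : ℝ => A j ⬝ᵥ v + ε * (A j ⬝ᵥ x) := by fun_prop
      have hlim := hcont.tendsto' 0 (A j ⬝ᵥ v) (by rw [zero_mul, add_zero])
      exact nhdsWithin_le_nhds ((hlim.eventually (lt_mem_nhds hj)).mono fun _ => le_of_lt)
  obtain ⟨ε, hεv, hεpos⟩ := (hε.and self_mem_nhdsWithin).exists
  exact ⟨ε, hεpos, fun j => by rw [mulVec_add, mulVec_smul]; exact hεv j⟩

theorem eq_zero_of_active_nonneg_of_dotProduct_nonpos {m n : ℕ} {A : Matrix (Fin m) (Fin n) ℝ}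
    {b : Fin m → ℝ} {c vstar x : Fin n → ℝ}
    (huniq : {v ∈ polyV A b | ∀ w ∈ polyV A b, c ⬝ᵥ v ≤ c ⬝ᵥ w} = {vstar})
    (hx : ∀ j, A j ⬝ᵥ vstar = b j → 0 ≤ A j ⬝ᵥ x) (hcx : c ⬝ᵥ x ≤ 0) : x = 0 := by
  have hv : vstar ∈ {v ∈ polyV A b | ∀ w ∈ polyV A b, c ⬝ᵥ v ≤ c ⬝ᵥ w} := huniq ▸ rfl
  obtain ⟨ε, hε, hmem⟩ := exists_pos_add_smul_mem_polyV_s11 A b hv.1 hx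
  have hopt : vstar + ε • x ∈ {v ∈ polyV A b | ∀ w ∈ polyV A b, c ⬝ᵥ v ≤ c ⬝ᵥ w} := by
    refine ⟨hmem, fun w hw => ?_⟩
    rw [dotProduct_add, dotProduct_smul, smul_eq_mul]
    nlinarith [hv.2 w hw]
  rw [huniq, mem_singleton_iff, add_eq_left, smul_eq_zero] at hopt
  exact hopt.resolve_left hε.ne'

theorem stmt_11_general (m n : ℕ)
    (A : Matrix (Fin m) (Fin n) ℝ) (b : Fin m → ℝ)
    (c : Fin n → ℝ) (vstar : Fin n → ℝ)
    (huniq : {v ∈ polyV A b | ∀ w ∈ polyV A b, c ⬝ᵥ v ≤ c ⬝ᵥ w} = {vstar}) :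
    ∃ ρ : Fin m → ℝ, 0 ≤ ρ ∧ Aᵀ.mulVec ρ = c ∧
      ∀ j, (0 < ρ j ↔ A j ⬝ᵥ vstar = b j) := by
  classical
  obtain ⟨y, hy, hAy⟩ := exists_pos_transpose_mulVec_eq
    (A.submatrix (Subtype.val : {j // A j ⬝ᵥ vstar = b j} → Fin m) id) c
    fun x hx hcx => eq_zero_of_active_nonneg_of_dotProduct_nonpos huniq
      (fun j hj => hx ⟨j, hj⟩) hcx
  refine ⟨fun j => if h : A j ⬝ᵥ vstar = b j then y ⟨j, h⟩ else 0, fun j => ?_,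
    by rw [transpose_mulVec_dite, hAy], fun j => ?_⟩ <;>
  by_cases hj : A j ⬝ᵥ vstar = b j <;> simp [hj, hy, (hy _).le]

theorem stmt_11 (m n : ℕ)
    (A : Matrix (Fin m) (Fin n) ℝ) (b : Fin m → ℝ)
    (hne : (polyV A b).Nonempty) (hbd : Bornology.IsBounded (polyV A b))
    (c : Fin n → ℝ) (vstar : Fin n → ℝ)
    (huniq : {v ∈ polyV A b | ∀ w ∈ polyV A b, c ⬝ᵥ v ≤ c ⬝ᵥ w} = {vstar}) :
    ∃ ρ : Fin m → ℝ, 0 ≤ ρ ∧ Aᵀ.mulVec ρ = c ∧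
      ∀ j, (0 < ρ j ↔ A j ⬝ᵥ vstar = b j) :=
  stmt_11_general m n A b c vstar huniq
end
end
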